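/- Let G be a simple graph embedded on the torus such that G has a 2-cut and the dual graph G* is simple. Then G* has a vertex cut of size at most 5. Equivalently, no 6-connected toroidal graph is the simple dual of a toroidal graph with a 2-cut. -/

import Mathlib

/-- A connected oriented combinatorial embedding of a (multi)graph, given by a
finite set of darts (directed edges), a rotation permutation `σ` (next dart in
the cyclic order around the tail vertex) and a fixed-point-free involution `α`
(dart reversal). -/
structure EmbGraph where
  D : Type
  finD : Finite D
  σ : Equiv.Perm D
  α : Equiv.Perm D
  α_invol : ∀ d, α (α d) = d
  α_ne : ∀ d, α d ≠ d

namespace EmbGraph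

variable (G : EmbGraph)

instance : Finite G.D := G.finD

/-- The setoid identifying darts in a common cycle of a permutation. -/
def sameCycleSetoid (f : Equiv.Perm G.D) : Setoid G.D :=
  ⟨f.SameCycle, ⟨fun _ => Equiv.Perm.SameCycle.refl f _, fun h => h.symm, fun h h' => h.trans h'⟩⟩

/-- The face permutation: the successor of the directed edge `(u,v)` in its
facial walk is the next edge after `(v,u)` in the rotation around `v`. -/
def facePerm : Equiv.Perm G.D := G.σ * G.α

/-- Vertices are the orbits of `σ`. -/
def Vert := Quotient (G.sameCycleSetoid G.σ)
/-- Edges are the orbits of `α`. -/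
def Edge := Quotient (G.sameCycleSetoid G.α)
/-- Faces are the orbits of the face permutation. -/
def Face := Quotient (G.sameCycleSetoid G.facePerm)

/-- The tail vertex of a dart. -/
def vtx (d : G.D) : G.Vert := Quotient.mk (G.sameCycleSetoid G.σ) d
def edgeOf (d : G.D) : G.Edge := Quotient.mk (G.sameCycleSetoid G.α) d
def faceOf (d : G.D) : G.Face := Quotient.mk (G.sameCycleSetoid G.facePerm) d

instance : Finite G.Vert := Quotient.finite _
instance : Finite G.Edge := Quotient.finite _
instance : Finite G.Face := Quotient.finite _

noncomputable def numVertices : ℕ := Nat.card G.Vert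
noncomputable def numEdges : ℕ := Nat.card G.Edge
noncomputable def numFaces : ℕ := Nat.card G.Face

/-- The Euler characteristic `v - e + f`; the genus `g` of the embedding is
defined by `v - e + f = 2 - 2g`. -/
noncomputable def eulerChar : ℤ := (G.numVertices : ℤ) - (G.numEdges : ℤ) + (G.numFaces : ℤ)

/-- The embedded graph is connected. -/
def Connected : Prop :=
  ∀ a b : G.D, Relation.EqvGen (fun x y => y = G.σ x ∨ y = G.α x) a b

/-- The degree of a vertex: the number of darts with this tail. -/
noncomputable def degree (v : G.Vert) : ℕ := Nat.card {d : G.D // G.vtx d = v}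

/-- The size of a face: the number of darts in its facial walk. -/
noncomputable def faceSize (f : G.Face) : ℕ := Nat.card {d : G.D // G.faceOf d = f}

/-- The underlying simple graph of the embedded graph. -/
def underlying : SimpleGraph G.Vert where
  Adj u v := u ≠ v ∧ ∃ d, G.vtx d = u ∧ G.vtx (G.α d) = v
  symm := ⟨by
    rintro u v ⟨huv, d, hd1, hd2⟩
    exact ⟨huv.symm, G.α d, hd2, by rw [G.α_invol]; exact hd1⟩⟩
  loopless := ⟨fun v h => h.1 rfl⟩

/-- The embedded graph is a simple graph: no loops and no multiple edges. -/
def IsSimple : Prop :=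
  (∀ d, G.vtx d ≠ G.vtx (G.α d)) ∧
    ∀ d d', G.vtx d = G.vtx d' → G.vtx (G.α d) = G.vtx (G.α d') → G.edgeOf d = G.edgeOf d'

/-- The dual graph: vertices are the faces of `G`, two faces being adjacent
if they share an edge. -/
def dualGraph : SimpleGraph G.Face where
  Adj f f' := f ≠ f' ∧ ∃ d, G.faceOf d = f ∧ G.faceOf (G.α d) = f'
  symm := ⟨by
    rintro f f' ⟨hff, d, hd1, hd2⟩
    exact ⟨hff.symm, G.α d, hd2, by rw [G.α_invol]; exact hd1⟩⟩
  loopless := ⟨fun f h => h.1 rfl⟩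

/-- The dual (multi)graph is simple: no face shares an edge with itself, and no
two faces share more than one edge. -/
def DualSimple : Prop :=
  (∀ d, G.faceOf d ≠ G.faceOf (G.α d)) ∧
    ∀ d d', G.faceOf d = G.faceOf d' → G.faceOf (G.α d) = G.faceOf (G.α d') →
      G.edgeOf d = G.edgeOf d'

/-- The dual embedded graph. -/
def dualMap : EmbGraph :=
  ⟨G.D, G.finD, G.σ * G.α, G.α, G.α_invol, G.α_ne⟩

/-- Identifying the angle following dart `a` with the angle following dart `b`:
the rotation is composed with the transposition of `a` and `b`. -/
noncomputable def identifyAngles (a b : G.D) : EmbGraph :=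
  letI : DecidableEq G.D := Classical.decEq _
  ⟨G.D, G.finD, G.σ * Equiv.swap a b, G.α, G.α_invol, G.α_ne⟩

/-- The H-operation applied to the edge given by the dart `d = (x,y)`, where
`x` and `y` have degree `3`.  With rotations `y,w',v` around `x` and `x,w,v'`
around `y`, it identifies the angle of `v` preceding `x` with the angle of `v'`
preceding `y`, and the angle of `w` following `y` with the angle of `w'`
following `x`, merging `v` with `v'` and `w` with `w'`. -/
noncomputable def Hop (d : G.D) : EmbGraph :=
  (G.identifyAngles (G.σ⁻¹ (G.α (G.σ (G.σ d)))) (G.σ⁻¹ (G.α (G.σ (G.σ (G.α d)))))).identifyAngles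
    (G.α (G.σ (G.α d))) (G.α (G.σ d))

end EmbGraph

/-- `S` is a vertex cut-set of `H`: deleting `S` leaves two vertices with no
path between them. -/
def IsCutSet {W : Type*} (H : SimpleGraph W) (S : Set W) : Prop :=
  ∃ a b : ↥(Sᶜ), ¬ (H.induce Sᶜ).Reachable a b

/-- `H` is `n`-connected: it has more than `n` vertices and no cut-set with
fewer than `n` vertices. -/
def KConnected {W : Type*} (n : ℕ) (H : SimpleGraph W) : Prop :=
  n < Nat.card W ∧ ∀ S : Set W, S.ncard < n → ¬ IsCutSet H S

/-- The set of genera `s` for which a simple `c`-connected embedded graph of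
genus `s` with a simple dual having a vertex cut of size `k` exists. -/
def deltaSet (k c : ℕ) : Set ℕ :=
  {s | ∃ G : EmbGraph, G.Connected ∧ G.IsSimple ∧ KConnected c G.underlying ∧
      G.eulerChar = 2 - 2 * (s : ℤ) ∧ G.DualSimple ∧
      ∃ S : Set G.Face, S.ncard = k ∧ IsCutSet G.dualGraph S}

/-- `δ_k(c)`: the minimum genus of a simple `c`-connected embedded graph whose
simple dual has a vertex cut of size `k`. -/
noncomputable def delta (k c : ℕ) : ℕ := sInf (deltaSet k c)

/-!
Suppose the dual has no vertex cut with at most five faces. Both `G` and its dual being simple,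
every vertex has degree at least three.

If every face has at least six sides, Euler's relation `v + f = e` on the torus together with
`2e ≥ 3v` and `2e ≥ 6f` makes `G` cubic. A simple dual makes `G` `3`-edge-connected, and a cubic
graph with a `2`-cut `{x, y}` has an edge cut of size at most two: a component of `G - {x, y}`,
enlarged by those of `x, y` that send two edges into it.

Otherwise the neighbours of a face with at most five sides would form a small cut unless that
face is adjacent to all others; so there are at most six faces and the dual is complete. Euler's
relation then leaves `K₅`, which has no cut, and the pentagonal embedding dual to `K₆` with nine
vertices, in which any two faces share exactly one edge. There a `2`-cut is ruled out by counting,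
face by face, the tails of the darts lying in the components of `G - {x, y}`: a face meeting two
components also meets `{x, y}` twice.
-/

theorem Nat.card_eq_sum_card_fiber {X Y : Type*} [Finite X] [Fintype Y] (q : X → Y) :
    Nat.card X = ∑ y, Nat.card {x // q x = y} := by
  rw [Nat.card_congr (Equiv.sigmaFiberEquiv q).symm, Nat.card_sigma]

section CutSet

variable {W : Type*} {H : SimpleGraph W} {S : Set W}

lemma IsCutSet.exists_not_adj (h : IsCutSet H S) :
    ∃ a b, a ∉ S ∧ b ∉ S ∧ a ≠ b ∧ ¬ H.Adj a b := by
  obtain ⟨a, b, hab⟩ := h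
  refine ⟨a, b, a.2, b.2, fun h => hab (Subtype.ext h ▸ .refl _), fun h => hab ?_⟩
  exact SimpleGraph.Adj.reachable (G := H.induce Sᶜ) h

lemma IsCutSet.ncard_add_two_le [Finite W] (h : IsCutSet H S) : S.ncard + 2 ≤ Nat.card W := by
  obtain ⟨a, b, ha, hb, hab, -⟩ := h.exists_not_adj
  have : 2 ≤ Sᶜ.ncard := (Set.one_lt_ncard_iff).2 ⟨a, b, ha, hb, hab⟩
  have := Set.ncard_add_ncard_compl S
  omega

lemma isCutSet_of_neighborSet_subset {a b : W} (ha : a ∉ S) (hb : b ∉ S) (hab : a ≠ b)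
    (hN : H.neighborSet a ⊆ S) : IsCutSet H S := by
  refine ⟨⟨a, ha⟩, ⟨b, hb⟩, fun hr => ?_⟩
  obtain ⟨p⟩ := hr
  cases p with
  | nil => exact hab rfl
  | @cons _ v _ hadj _ => exact v.2 (hN hadj)

lemma adj_of_forall_not_isCutSet {k : ℕ} [Finite W]
    (hsmall : ∀ S : Set W, S.ncard ≤ k → ¬ IsCutSet H S) (hW : Nat.card W ≤ k + 2)
    {a b : W} (hab : a ≠ b) : H.Adj a b := by
  by_contra hadj
  refine hsmall {a, b}ᶜ ?_ (isCutSet_of_neighborSet_subset (by simp) (by simp) hab fun w hw => ?_)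
  · have := Set.ncard_add_ncard_compl {a, b}
    rw [Set.ncard_pair hab] at this
    omega
  · simp only [Set.mem_compl_iff, Set.mem_insert_iff, Set.mem_singleton_iff, not_or]
    exact ⟨(H.ne_of_adj hw).symm, fun h => hadj (h ▸ hw)⟩

end CutSet

namespace EmbGraph

open Equiv.Perm

variable {G : EmbGraph} {d d' e : G.D} {S U V K : Set G.Vert} {f g g₀ p q r : G.Face}
  {u v w x y b : G.Vert}

/-! ### Orbits and counting -/

attribute [simp] α_invol

lemma vtx_eq_iff : G.vtx d = G.vtx d' ↔ G.σ.SameCycle d d' := Quotient.eq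

lemma faceOf_eq_iff : G.faceOf d = G.faceOf d' ↔ G.facePerm.SameCycle d d' := Quotient.eq

lemma edgeOf_eq_iff : G.edgeOf d = G.edgeOf d' ↔ G.α.SameCycle d d' := Quotient.eq

@[simp] lemma vtx_σ (d : G.D) : G.vtx (G.σ d) = G.vtx d :=
  vtx_eq_iff.2 (sameCycle_apply_left.2 (.refl _ _))

@[simp] lemma faceOf_facePerm (d : G.D) : G.faceOf (G.facePerm d) = G.faceOf d :=
  faceOf_eq_iff.2 (sameCycle_apply_left.2 (.refl _ _))

@[simp] lemma vtx_facePerm (d : G.D) : G.vtx (G.facePerm d) = G.vtx (G.α d) := vtx_σ _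

@[simp] lemma edgeOf_α (d : G.D) : G.edgeOf (G.α d) = G.edgeOf d :=
  edgeOf_eq_iff.2 (sameCycle_apply_left.2 (.refl _ _))

lemma α_mul_α : G.α * G.α = 1 := Equiv.ext G.α_invol

lemma edgeOf_eq_iff_eq_or_eq : G.edgeOf d' = G.edgeOf d ↔ d' = d ∨ d' = G.α d := by
  refine ⟨fun h => ?_, by rintro (rfl | rfl) <;> simp⟩
  obtain ⟨n, -, rfl⟩ := (edgeOf_eq_iff.1 h).symm.exists_pow_eq'
  rcases Nat.even_or_odd n with ⟨k, rfl⟩ | ⟨k, rfl⟩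
  · left; simp [← two_mul, pow_mul, sq, α_mul_α]
  · right; simp [pow_succ, pow_mul, sq, α_mul_α]

lemma exists_vtx_eq (v : G.Vert) : ∃ d, G.vtx d = v := Quotient.exists_rep v

lemma exists_faceOf_eq (f : G.Face) : ∃ d, G.faceOf d = f := Quotient.exists_rep f

lemma exists_edgeOf_eq (e : G.Edge) : ∃ d, G.edgeOf d = e := Quotient.exists_rep e

lemma degree_eq_ncard (v : G.Vert) : G.degree v = {d | G.vtx d = v}.ncard :=
  Nat.card_coe_set_eq _

lemma faceSize_eq_ncard (f : G.Face) : G.faceSize f = {d | G.faceOf d = f}.ncard :=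
  Nat.card_coe_set_eq _

lemma IsSimple.eq_of_vtx_eq (hs : G.IsSimple) (h : G.vtx d = G.vtx d')
    (hα : G.vtx (G.α d) = G.vtx (G.α d')) : d = d' := by
  rcases edgeOf_eq_iff_eq_or_eq.1 (hs.2 d d' h hα) with h' | rfl
  · exact h'
  · exact (hs.1 d' h.symm).elim

lemma IsSimple.adj_vtx (hs : G.IsSimple) (d : G.D) :
    G.underlying.Adj (G.vtx d) (G.vtx (G.α d)) :=
  ⟨hs.1 d, d, rfl, rfl⟩

lemma card_darts_eq_sum_degree [Fintype G.Vert] : Nat.card G.D = ∑ v, G.degree v :=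
  Nat.card_eq_sum_card_fiber G.vtx

lemma card_darts_eq_sum_faceSize [Fintype G.Face] : Nat.card G.D = ∑ f, G.faceSize f :=
  Nat.card_eq_sum_card_fiber G.faceOf

lemma card_darts_eq_two_mul_numEdges : Nat.card G.D = 2 * G.numEdges := by
  have : Fintype G.Edge := Fintype.ofFinite _
  have hfiber (e : G.Edge) : Nat.card {d // G.edgeOf d = e} = 2 := by
    obtain ⟨d, rfl⟩ := exists_edgeOf_eq e
    have : {d' | G.edgeOf d' = G.edgeOf d} = {d, G.α d} := Set.ext fun _ => edgeOf_eq_iff_eq_or_eq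
    rw [← Set.ncard_pair (G.α_ne d).symm, ← this, ← Nat.card_coe_set_eq]
    rfl
  simp [Nat.card_eq_sum_card_fiber G.edgeOf, hfiber, numEdges, mul_comm]

lemma three_mul_ncard_le_ncard_tails {U : Set G.Vert} (hU : ∀ v ∈ U, 3 ≤ G.degree v) :
    3 * U.ncard ≤ {d | G.vtx d ∈ U}.ncard := by
  have : Fintype U := Fintype.ofFinite _
  have hfiber (u : U) :
      Nat.card {t : {d | G.vtx d ∈ U} // (⟨G.vtx t, t.2⟩ : U) = u} = G.degree u :=
    Nat.card_congr
      { toFun := fun t => ⟨t.1, congrArg Subtype.val t.2⟩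
        invFun := fun t => ⟨⟨t.1, by simp [t.2]⟩, Subtype.ext t.2⟩
        left_inv := fun _ => rfl
        right_inv := fun _ => rfl }
  calc 3 * U.ncard = ∑ _u : U, 3 := by
        rw [Finset.sum_const, Finset.card_univ, smul_eq_mul, ← Nat.card_eq_fintype_card,
          Nat.card_coe_set_eq, mul_comm]
    _ ≤ ∑ u : U, G.degree u := Finset.sum_le_sum fun u _ => hU u u.2
    _ = {d | G.vtx d ∈ U}.ncard := by
      simp only [← hfiber, ← Nat.card_eq_sum_card_fiber, Nat.card_coe_set_eq]

/-- At a vertex of degree one, the face of `α d` comes back along `d`; at a vertex of degree two,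
both edges separate the same two faces. -/
lemma three_le_degree (hs : G.IsSimple) (hd : G.DualSimple) (v : G.Vert) : 3 ≤ G.degree v := by
  obtain ⟨d, rfl⟩ := exists_vtx_eq v
  have hσ₁ : G.σ d ≠ d := fun h =>
    hd.1 d (by simpa [facePerm, h] using faceOf_facePerm (G.α d))
  by_cases hσ₂ : G.σ (G.σ d) = d
  · have hσ : G.σ d = G.α d := by
      have h₁ : G.faceOf (G.α d) = G.faceOf (G.σ d) := by
        simpa [facePerm] using (faceOf_facePerm (G.α d)).symm
      have h₂ : G.faceOf (G.α (G.σ d)) = G.faceOf d := by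
        simpa [facePerm, hσ₂] using (faceOf_facePerm (G.α (G.σ d))).symm
      have := hd.2 d (G.α (G.σ d)) h₂.symm (by simpa using h₁)
      simpa [hσ₁] using edgeOf_eq_iff_eq_or_eq.1 ((edgeOf_α (G.σ d)).symm.trans this.symm)
    exact absurd (by rw [← hσ, vtx_σ]) (hs.1 d)
  · rw [degree_eq_ncard]
    calc 3 = ({d, G.σ d, G.σ (G.σ d)} : Set G.D).ncard := by
          refine (Set.ncard_eq_three.2 ⟨_, _, _, hσ₁.symm, Ne.symm hσ₂, ?_, rfl⟩).symm
          exact fun h => hσ₁ (G.σ.injective h).symm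
      _ ≤ _ := Set.ncard_le_ncard (by rintro _ (rfl | rfl | rfl) <;> simp) (Set.toFinite _)

/-! ### Components of `G - S` -/

def component (G : EmbGraph) (S : Set G.Vert) (v : G.Vert) : Set G.Vert :=
  {u | ∃ (hu : u ∉ S) (hv : v ∉ S),
    (G.underlying.induce Sᶜ).Reachable ⟨u, hu⟩ ⟨v, hv⟩}

lemma mem_component_self (hv : v ∉ S) : v ∈ G.component S v := ⟨hv, hv, .refl _⟩

lemma notMem_of_mem_component (hu : u ∈ G.component S v) : u ∉ S := hu.1

lemma component_eq_of_mem (hu : u ∈ G.component S v) : G.component S u = G.component S v := by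
  obtain ⟨hu, hv, huv⟩ := hu
  ext w
  exact ⟨fun ⟨hw, _, hwu⟩ => ⟨hw, hv, hwu.trans huv⟩,
    fun ⟨hw, _, hwv⟩ => ⟨hw, hu, hwv.trans huv.symm⟩⟩

lemma component_eq_of_mem_of_mem (hv : u ∈ G.component S v) (hw : u ∈ G.component S w) :
    G.component S v = G.component S w :=
  (component_eq_of_mem hv).symm.trans (component_eq_of_mem hw)

lemma disjoint_component (h : G.component S v ≠ G.component S w) :
    Disjoint (G.component S v) (G.component S w) :=
  Set.disjoint_left.2 fun _ hv hw => h (component_eq_of_mem_of_mem hv hw)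

lemma notMem_component_of_not_reachable {a b : ↥Sᶜ}
    (h : ¬ (G.underlying.induce Sᶜ).Reachable a b) :
    (a : G.Vert) ∉ G.component S b :=
  fun ⟨_, _, hab⟩ => h hab

lemma IsSimple.vtx_α_mem_component (hs : G.IsSimple) (h : G.vtx d ∈ G.component S v)
    (hα : G.vtx (G.α d) ∉ S) : G.vtx (G.α d) ∈ G.component S v := by
  obtain ⟨hd, hv, hr⟩ := h
  have hadj : (G.underlying.induce Sᶜ).Adj ⟨_, hα⟩ ⟨_, hd⟩ := (hs.adj_vtx d).symm
  exact ⟨hα, hv, hadj.reachable.trans hr⟩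

lemma IsSimple.vtx_mem_component (hs : G.IsSimple) (h : G.vtx (G.α d) ∈ G.component S v)
    (hα : G.vtx d ∉ S) : G.vtx d ∈ G.component S v := by
  simpa using hs.vtx_α_mem_component (d := G.α d) h (by simpa using hα)

lemma disjoint_component_left : Disjoint (G.component S v) S :=
  Set.disjoint_left.2 fun _ hu => notMem_of_mem_component hu

lemma _root_.IsCutSet.exists_component_ne (h : IsCutSet G.underlying S) (K : Set G.Vert) :
    ∃ v ∉ S, G.component S v ≠ K := by
  obtain ⟨a, b, hab⟩ := h
  by_cases ha : G.component S a = K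
  · refine ⟨b, b.2, fun hb => notMem_component_of_not_reachable hab ?_⟩
    rw [hb, ← ha]
    exact mem_component_self a.2
  · exact ⟨a, a.2, ha⟩

lemma IsSimple.two_le_ncard_component (hs : G.IsSimple) (hS : S.ncard ≤ 2) (hv : v ∉ S)
    (hdeg : 3 ≤ G.degree v) : 2 ≤ (G.component S v).ncard := by
  by_contra! hlt
  have hα (d : G.D) (hd : G.vtx d = v) : G.vtx (G.α d) ∈ S := by
    subst hd
    by_contra hS
    have hmem := hs.vtx_α_mem_component (mem_component_self hv) hS
    exact hs.1 d ((Set.ncard_le_one_iff).1 (by omega) hmem (mem_component_self hv)).symm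
  have := Set.ncard_le_ncard_of_injOn (s := {d | G.vtx d = v}) (fun d => G.vtx (G.α d)) hα
    fun d hd d' hd' h => hs.eq_of_vtx_eq (hd.trans hd'.symm) h
  rw [← degree_eq_ncard] at this
  omega

/-! ### Edge cuts and cubic graphs -/

def outDarts (G : EmbGraph) (W : Set G.Vert) : Set G.D :=
  {d | G.vtx d ∈ W ∧ G.vtx (G.α d) ∉ W}

lemma exists_mem_outDarts_of_faceOf_eq {W : Set G.Vert} (h₀ : G.vtx d ∈ W)
    (h₁ : G.vtx d' ∉ W) (hf : G.faceOf d' = G.faceOf d) :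
    ∃ e ∈ G.outDarts W, G.faceOf e = G.faceOf d := by
  by_contra! hnone
  have hpow (n : ℕ) : G.vtx ((G.facePerm ^ n) d) ∈ W := by
    induction n with
    | zero => exact h₀
    | succ n ih =>
      rw [pow_succ', Equiv.Perm.mul_apply, vtx_facePerm]
      by_contra hout
      exact hnone _ ⟨ih, hout⟩ (faceOf_eq_iff.2 (Equiv.Perm.sameCycle_pow_left.2 (.refl _ _)))
  obtain ⟨n, -, rfl⟩ := (faceOf_eq_iff.1 hf).symm.exists_pow_eq'
  exact h₁ (hpow n)

lemma exists_α_mem_outDarts_of_faceOf_eq {W : Set G.Vert} (h₀ : G.vtx d ∉ W)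
    (h₁ : G.vtx d' ∈ W) (hf : G.faceOf d' = G.faceOf d) :
    ∃ e, G.α e ∈ G.outDarts W ∧ G.faceOf e = G.faceOf d := by
  obtain ⟨e, ⟨he₁, he₂⟩, hef⟩ :=
    exists_mem_outDarts_of_faceOf_eq (W := Wᶜ) h₀ (by simpa) hf
  exact ⟨e, ⟨by simpa using he₂, by simpa using he₁⟩, hef⟩

lemma Connected.outDarts_nonempty (hconn : G.Connected) {W : Set G.Vert} (h₀ : G.vtx d ∈ W)
    (h₁ : G.vtx d' ∉ W) : (G.outDarts W).Nonempty := by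
  by_contra! hnone
  have hstep {a b : G.D} (h : b = G.σ a ∨ b = G.α a) : G.vtx a ∈ W ↔ G.vtx b ∈ W := by
    rcases h with rfl | rfl
    · simp
    · refine ⟨fun ha => ?_, fun hb => ?_⟩ <;> by_contra hout
      · exact hnone.subset (show a ∈ G.outDarts W from ⟨ha, hout⟩)
      · exact hnone.subset (show G.α a ∈ G.outDarts W from ⟨hb, by simpa using hout⟩)
  have hinv {a b : G.D} (h : Relation.EqvGen (fun x y => y = G.σ x ∨ y = G.α x) a b) :
      G.vtx a ∈ W ↔ G.vtx b ∈ W := by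
    induction h with
    | rel _ _ h => exact hstep h
    | refl => rfl
    | symm _ _ _ ih => exact ih.symm
    | trans _ _ _ _ _ ih₁ ih₂ => exact ih₁.trans ih₂
  exact h₁ ((hinv (hconn d d')).1 h₀)

/-- The faces on the two sides of a leaving edge must each be left along another edge, and these
two edges differ since the dual has no parallel edges. -/
lemma DualSimple.three_le_ncard_outDarts (hd : G.DualSimple) (hconn : G.Connected)
    {W : Set G.Vert} (h₀ : G.vtx d ∈ W) (h₁ : G.vtx d' ∉ W) :
    3 ≤ (G.outDarts W).ncard := by
  obtain ⟨d₀, hd₀⟩ := hconn.outDarts_nonempty h₀ h₁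
  obtain ⟨e₁, he₁, hfe₁⟩ := exists_α_mem_outDarts_of_faceOf_eq (d := G.facePerm d₀)
    (by simpa using hd₀.2) hd₀.1 (faceOf_facePerm d₀).symm
  obtain ⟨e₂, he₂, hfe₂⟩ := exists_mem_outDarts_of_faceOf_eq (d := G.facePerm (G.α d₀))
    (d' := G.α d₀) (by simpa using hd₀.1) hd₀.2 (faceOf_facePerm _).symm
  rw [faceOf_facePerm] at hfe₁ hfe₂
  have h₀₁ : d₀ ≠ G.α e₁ := by
    intro h
    obtain rfl : e₁ = G.α d₀ := by simp [h]
    exact hd.1 d₀ hfe₁.symm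
  have h₀₂ : d₀ ≠ e₂ := by
    rintro rfl
    exact hd.1 d₀ hfe₂
  refine (Set.two_lt_ncard_iff).2
    ⟨d₀, G.α e₁, e₂, hd₀, he₁, he₂, h₀₁, h₀₂, fun h => ?_⟩
  have hedge := hd.2 e₁ d₀ hfe₁ (by rw [h, hfe₂])
  rcases edgeOf_eq_iff_eq_or_eq.1 hedge with rfl | rfl
  · exact hd₀.2 (by simpa using he₁.1)
  · exact h₀₁ (by simp)

lemma ncard_darts_into_eq (B : Set G.Vert) (z : G.Vert) :
    {e | G.vtx e ∈ B ∧ G.vtx (G.α e) = z}.ncard =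
      {e | G.vtx e = z ∧ G.vtx (G.α e) ∈ B}.ncard := by
  rw [← Set.ncard_image_of_injective {e | G.vtx e = z ∧ G.vtx (G.α e) ∈ B} G.α.injective]
  congr 1
  ext e
  refine ⟨fun ⟨he, hz⟩ => ⟨G.α e, ⟨hz, by simpa using he⟩, by simp⟩, ?_⟩
  rintro ⟨e, ⟨rfl, he⟩, rfl⟩
  exact ⟨he, by simp⟩

/-- Of the three edges at a vertex `z` of degree `3`, either at most one ends outside `B` or at
most one ends inside `B`; adding `z` to `B` in the first case, a set left only towards `x` and
`y` is enlarged to one left by at most two edges. -/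
lemma exists_ncard_outDarts_le_two {B : Set G.Vert} (hx : G.degree x = 3)
    (hy : G.degree y = 3) (hxB : x ∉ B) (hyB : y ∉ B)
    (hB : ∀ e ∈ G.outDarts B, G.vtx (G.α e) = x ∨ G.vtx (G.α e) = y) :
    ∃ W, B ⊆ W ∧ W ⊆ B ∪ {x, y} ∧ (G.outDarts W).ncard ≤ 2 := by
  set W := B ∪ {z | (z = x ∨ z = y) ∧ 2 ≤ {e | G.vtx e = z ∧ G.vtx (G.α e) ∈ B}.ncard}
  set P : G.Vert → Set G.D := fun z =>
    {e | e ∈ G.outDarts W ∧ (G.vtx e = z ∨ G.vtx e ∈ B ∧ G.vtx (G.α e) = z)}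
  have hP {z : G.Vert} (hz : G.degree z = 3) (hzB : z ∉ B) (hxy : z = x ∨ z = y) :
      (P z).ncard ≤ 1 := by
    by_cases hzW : 2 ≤ {e | G.vtx e = z ∧ G.vtx (G.α e) ∈ B}.ncard
    · have hsub : P z ⊆ {e | G.vtx e = z} \ {e | G.vtx e = z ∧ G.vtx (G.α e) ∈ B} := by
        rintro e ⟨⟨heW, heW'⟩, rfl | ⟨-, rfl⟩⟩
        · exact ⟨rfl, fun h => heW' (Or.inl h.2)⟩
        · exact absurd (Or.inr ⟨hxy, hzW⟩) heW'
      have := Set.ncard_le_ncard hsub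
      rw [Set.ncard_sdiff (fun e he => he.1), ← degree_eq_ncard, hz] at this
      omega
    · have hsub : P z ⊆ {e | G.vtx e ∈ B ∧ G.vtx (G.α e) = z} := by
        rintro e ⟨⟨heW, -⟩, rfl | he⟩
        · exact absurd (heW.resolve_left hzB).2 hzW
        · exact he
      have := Set.ncard_le_ncard hsub
      rw [ncard_darts_into_eq] at this
      omega
  refine ⟨W, Set.subset_union_left, ?_, ?_⟩
  · exact fun z hz => hz.imp_right fun h => h.1
  · have hcover : G.outDarts W ⊆ P x ∪ P y := by
      rintro e ⟨heW | ⟨rfl | rfl, h2⟩, heW'⟩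
      · have hout : e ∈ G.outDarts B := ⟨heW, fun h => heW' (Or.inl h)⟩
        rcases hB e hout with h | h
        · exact Or.inl ⟨⟨Or.inl heW, heW'⟩, Or.inr ⟨heW, h⟩⟩
        · exact Or.inr ⟨⟨Or.inl heW, heW'⟩, Or.inr ⟨heW, h⟩⟩
      · exact Or.inl ⟨⟨Or.inr ⟨Or.inl rfl, h2⟩, heW'⟩, Or.inl rfl⟩
      · exact Or.inr ⟨⟨Or.inr ⟨Or.inr rfl, h2⟩, heW'⟩, Or.inl rfl⟩
    calc (G.outDarts W).ncard ≤ (P x ∪ P y).ncard := Set.ncard_le_ncard hcover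
      _ ≤ (P x).ncard + (P y).ncard := Set.ncard_union_le _ _
      _ ≤ 2 := by linarith [hP hx hxB (Or.inl rfl), hP hy hyB (Or.inr rfl)]

theorem not_isCutSet_pair_of_cubic (hs : G.IsSimple) (hd : G.DualSimple) (hconn : G.Connected)
    (hcubic : ∀ v, G.degree v = 3) (x y : G.Vert) : ¬ IsCutSet G.underlying {x, y} := by
  rintro ⟨a, b, hab⟩
  set B := G.component {x, y} b
  obtain ⟨W, hBW, hWB, hW⟩ := exists_ncard_outDarts_le_two (B := B) (hcubic x) (hcubic y)
    (fun h => notMem_of_mem_component h (by simp)) (fun h => notMem_of_mem_component h (by simp))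
    (fun e ⟨he, he'⟩ => by
      by_contra hxy
      exact he' (hs.vtx_α_mem_component he (by simpa using hxy)))
  obtain ⟨db, hdb⟩ := exists_vtx_eq (b : G.Vert)
  obtain ⟨da, hda⟩ := exists_vtx_eq (a : G.Vert)
  have hbW : G.vtx db ∈ W := hBW (hdb ▸ mem_component_self b.2)
  have haW : G.vtx da ∉ W := fun h =>
    (hWB (hda ▸ h)).elim (notMem_component_of_not_reachable hab) a.2
  have := hd.three_le_ncard_outDarts hconn hbW haW
  omega

/-! ### Faces and the dual graph -/

lemma ncard_neighborSet_dualGraph_le (f : G.Face) :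
    (G.dualGraph.neighborSet f).ncard ≤ G.faceSize f := by
  rw [faceSize_eq_ncard]
  refine (Set.ncard_le_ncard ?_).trans (Set.ncard_image_le (f := fun d => G.faceOf (G.α d)))
  rintro g ⟨-, d, hd, rfl⟩
  exact ⟨d, hd, rfl⟩

lemma card_face_le_faceSize_add_one (hadj : ∀ g, f ≠ g → G.dualGraph.Adj f g) :
    Nat.card G.Face ≤ G.faceSize f + 1 := by
  have hsub : {f}ᶜ ⊆ G.dualGraph.neighborSet f := fun g hg => hadj g (Ne.symm hg)
  have := Set.ncard_add_ncard_compl {f}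
  have := (Set.ncard_le_ncard hsub).trans (ncard_neighborSet_dualGraph_le f)
  rw [Set.ncard_singleton] at *
  omega

/-- Across its edges, a face meets every other face exactly once. -/
lemma DualSimple.faceSize_add_one (hd : G.DualSimple)
    (hcomplete : ∀ g h, g ≠ h → G.dualGraph.Adj g h) (f : G.Face) :
    G.faceSize f + 1 = Nat.card G.Face := by
  have hbij : Set.BijOn (fun d => G.faceOf (G.α d)) {d | G.faceOf d = f} {f}ᶜ := by
    refine ⟨fun d hdf => ?_, fun d hdf d' hdf' h => ?_, fun g hg => ?_⟩
    · exact fun h => hd.1 d (hdf.trans h.symm)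
    · rcases edgeOf_eq_iff_eq_or_eq.1 (hd.2 d d' (hdf.trans hdf'.symm) h) with h' | rfl
      · exact h'
      · exact (hd.1 d' (hdf'.trans hdf.symm)).elim
    · obtain ⟨-, d, hdf, rfl⟩ := hcomplete f g (Ne.symm hg)
      exact ⟨d, hdf, rfl⟩
  rw [faceSize_eq_ncard, hbij.ncard_eq, ← Set.ncard_add_ncard_compl {f}, Set.ncard_singleton,
    add_comm]

lemma DualSimple.card_darts_add_card_face (hd : G.DualSimple)
    (hcomplete : ∀ g h, g ≠ h → G.dualGraph.Adj g h) :
    Nat.card G.D + Nat.card G.Face = Nat.card G.Face * Nat.card G.Face := by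
  have : Fintype G.Face := Fintype.ofFinite _
  calc Nat.card G.D + Nat.card G.Face = ∑ f, (G.faceSize f + 1) := by
        simp [card_darts_eq_sum_faceSize, Finset.sum_add_distrib]
    _ = Nat.card G.Face * Nat.card G.Face := by
        simp [hd.faceSize_add_one hcomplete]

lemma dualGraph_adj_of_faceSize_le {k : ℕ}
    (hsmall : ∀ S : Set G.Face, S.ncard ≤ k → ¬ IsCutSet G.dualGraph S)
    (hf : G.faceSize f ≤ k)
    {g : G.Face} (hfg : f ≠ g) : G.dualGraph.Adj f g := by
  by_contra h
  exact hsmall _ ((ncard_neighborSet_dualGraph_le f).trans hf)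
    (isCutSet_of_neighborSet_subset (G.dualGraph.irrefl) h hfg subset_rfl)

lemma numVertices_add_numFaces (heuler : G.eulerChar = 0) :
    G.numVertices + G.numFaces = G.numEdges := by
  unfold eulerChar at heuler
  omega

lemma degree_eq_three_of_six_le_faceSize (hs : G.IsSimple) (hd : G.DualSimple)
    (heuler : G.eulerChar = 0) (h6 : ∀ f, 6 ≤ G.faceSize f) (v : G.Vert) : G.degree v = 3 := by
  have : Fintype G.Vert := .ofFinite _
  have : Fintype G.Face := .ofFinite _
  have hF : 6 * Nat.card G.Face ≤ Nat.card G.D := by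
    have := Finset.card_nsmul_le_sum Finset.univ _ 6 fun f _ => h6 f
    rwa [← card_darts_eq_sum_faceSize, Finset.card_univ, ← Nat.card_eq_fintype_card,
      smul_eq_mul, mul_comm] at this
  have hsum : ∑ _v : G.Vert, 3 = ∑ v, G.degree v := by
    have hV := Finset.sum_le_sum fun v (_ : v ∈ Finset.univ) => three_le_degree hs hd v
    have hVF := numVertices_add_numFaces heuler
    have hE := card_darts_eq_two_mul_numEdges (G := G)
    rw [← card_darts_eq_sum_degree, Finset.sum_const, Finset.card_univ,
      ← Nat.card_eq_fintype_card, smul_eq_mul] at hV ⊢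
    unfold numVertices numFaces at hVF
    omega
  exact (Finset.sum_eq_sum_iff_of_le fun v _ => three_le_degree hs hd v).1 hsum v
    (Finset.mem_univ v) |>.symm

def edgeEnds (G : EmbGraph) : G.Edge → Sym2 G.Vert :=
  Quotient.lift (fun d => s(G.vtx d, G.vtx (G.α d))) fun d d' h => by
    rcases edgeOf_eq_iff_eq_or_eq.1 (Quotient.sound h : G.edgeOf d = G.edgeOf d').symm with
      rfl | rfl
    · rfl
    · simp [Sym2.eq_swap]

lemma IsSimple.edgeEnds_injective (hs : G.IsSimple) : Function.Injective G.edgeEnds := by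
  rintro ⟨d⟩ ⟨d'⟩ h
  change s(G.vtx d, G.vtx (G.α d)) = s(G.vtx d', G.vtx (G.α d')) at h
  change G.edgeOf d = G.edgeOf d'
  rcases Sym2.eq_iff.1 h with ⟨h₁, h₂⟩ | ⟨h₁, h₂⟩
  · rw [hs.eq_of_vtx_eq h₁ h₂]
  · rw [hs.eq_of_vtx_eq (d' := G.α d') h₁ (by simpa using h₂), edgeOf_α]

lemma IsSimple.underlying_adj_of_card_edge_eq_choose (hs : G.IsSimple)
    (hE : Nat.card G.Edge = (Nat.card G.Vert).choose 2) {u w : G.Vert} (huw : u ≠ w) :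
    G.underlying.Adj u w := by
  classical
  have : Fintype G.Vert := .ofFinite _
  have hdiag (e : G.Edge) : ¬ (G.edgeEnds e).IsDiag := by
    obtain ⟨d, rfl⟩ := exists_edgeOf_eq e
    exact fun h => hs.1 d (Sym2.mk_isDiag_iff.1 h)
  let ends : G.Edge → {p : Sym2 G.Vert // ¬ p.IsDiag} := fun e => ⟨G.edgeEnds e, hdiag e⟩
  have hbij : Function.Bijective ends := by
    refine (Nat.bijective_iff_injective_and_card ends).2
      ⟨fun e e' h => hs.edgeEnds_injective (congrArg Subtype.val h), ?_⟩
    rw [hE, Nat.card_eq_fintype_card, Nat.card_eq_fintype_card, Sym2.card_subtype_not_diag]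
  obtain ⟨e, he⟩ := hbij.2 ⟨s(u, w), Sym2.mk_isDiag_iff.not.2 huw⟩
  obtain ⟨d, rfl⟩ := exists_edgeOf_eq e
  rcases Sym2.eq_iff.1 (congrArg Subtype.val he) with ⟨rfl, rfl⟩ | ⟨rfl, rfl⟩
  · exact hs.adj_vtx d
  · exact (hs.adj_vtx d).symm

/-! ### Tails of darts around a face -/

def faceTails (G : EmbGraph) (g : G.Face) (U : Set G.Vert) : Set G.D :=
  {d | G.faceOf d = g ∧ G.vtx d ∈ U}

lemma ncard_faceTails_union (h : Disjoint U V) :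
    (G.faceTails g (U ∪ V)).ncard = (G.faceTails g U).ncard + (G.faceTails g V).ncard := by
  rw [← Set.ncard_union_eq (Set.disjoint_left.2 fun d hU hV => h.notMem_of_mem_left hU.2 hV.2)]
  congr 1
  ext d
  simp [faceTails, and_or_left]

lemma ncard_faceTails_le (g : G.Face) (U : Set G.Vert) :
    (G.faceTails g U).ncard ≤ G.faceSize g :=
  faceSize_eq_ncard g ▸ Set.ncard_le_ncard fun _ hd => hd.1

/-- Around a face, heads are tails shifted by one step. -/
lemma ncard_faceHeads_eq (g : G.Face) (U : Set G.Vert) :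
    {d | G.faceOf d = g ∧ G.vtx (G.α d) ∈ U}.ncard = (G.faceTails g U).ncard := by
  rw [← Set.ncard_image_of_injective _ G.facePerm.injective]
  congr 1
  ext d
  obtain ⟨d, rfl⟩ := G.facePerm.surjective d
  rw [G.facePerm.injective.mem_set_image]
  simp [faceTails]

lemma sum_ncard_faceTails [Fintype G.Face] (U : Set G.Vert) :
    ∑ g, (G.faceTails g U).ncard = {d | G.vtx d ∈ U}.ncard := by
  rw [← Nat.card_coe_set_eq {d | G.vtx d ∈ U},
    Nat.card_eq_sum_card_fiber fun d : {d | G.vtx d ∈ U} => G.faceOf d]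
  refine Finset.sum_congr rfl fun g _ => ?_
  rw [← Nat.card_coe_set_eq]
  exact Nat.card_congr
    { toFun := fun d => ⟨⟨d.1, d.2.2⟩, d.2.1⟩
      invFun := fun d => ⟨d.1.1, d.2, d.1.2⟩
      left_inv := fun _ => rfl
      right_inv := fun _ => rfl }

lemma facePerm_ne_self (h : 2 ≤ G.faceSize (G.faceOf d)) : G.facePerm d ≠ d := by
  intro hfix
  have hsub : {d' | G.faceOf d' = G.faceOf d} ⊆ {d} := by
    intro d' hd'
    obtain ⟨n, -, rfl⟩ := (faceOf_eq_iff.1 hd').symm.exists_pow_eq'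
    exact Equiv.Perm.pow_apply_eq_self_of_apply_eq_self hfix n
  have := Set.ncard_le_ncard hsub
  rw [Set.ncard_singleton, ← faceSize_eq_ncard] at this
  omega

lemma IsSimple.edgeOf_eq_of_mem_pair (hs : G.IsSimple) (hd : G.vtx d ∈ ({u, w} : Set G.Vert))
    (hdα : G.vtx (G.α d) ∈ ({u, w} : Set G.Vert)) (he : G.vtx e ∈ ({u, w} : Set G.Vert))
    (heα : G.vtx (G.α e) ∈ ({u, w} : Set G.Vert)) : G.edgeOf d = G.edgeOf e := by
  apply hs.edgeEnds_injective
  change s(G.vtx d, G.vtx (G.α d)) = s(G.vtx e, G.vtx (G.α e))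
  have := hs.1 d
  have := hs.1 e
  simp only [Set.mem_insert_iff, Set.mem_singleton_iff] at *
  rcases hd with h₁ | h₁ <;> rcases hdα with h₂ | h₂ <;> rcases he with h₃ | h₃ <;>
    rcases heα with h₄ | h₄ <;> simp_all [Sym2.eq_swap]

lemma IsSimple.exists_vtx_notMem_pair (hs : G.IsSimple) (h : 3 ≤ G.faceSize g) :
    ∃ d, G.faceOf d = g ∧ G.vtx d ∉ ({u, w} : Set G.Vert) := by
  by_contra! hall
  obtain ⟨d₀, rfl⟩ := exists_faceOf_eq g
  have hα (d : G.D) (hd : G.faceOf d = G.faceOf d₀) :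
      G.vtx (G.α d) ∈ ({u, w} : Set G.Vert) := by
    simpa using hall (G.facePerm d) (by simpa using hd)
  have hsub : {d | G.faceOf d = G.faceOf d₀} ⊆ {d₀, G.α d₀} := fun d hd =>
    edgeOf_eq_iff_eq_or_eq.1
      (hs.edgeOf_eq_of_mem_pair (hall d hd) (hα d hd) (hall d₀ rfl) (hα d₀ rfl))
  have := (Set.ncard_le_ncard hsub).trans (Set.ncard_insert_le d₀ {G.α d₀})
  rw [← faceSize_eq_ncard, Set.ncard_singleton] at this
  omega

lemma IsSimple.exists_mem_faceTails_vtx_α_mem_component (hs : G.IsSimple)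
    (hd : d ∈ G.faceTails g (G.component S v)) (hd' : G.faceOf d' = g)
    (hd'v : G.vtx d' ∉ G.component S v) :
    ∃ e ∈ G.faceTails g S, G.vtx (G.α e) ∈ G.component S v := by
  obtain ⟨e, ⟨he₁, he₂⟩, hef⟩ :=
    exists_α_mem_outDarts_of_faceOf_eq hd'v hd.2 (hd.1.trans hd'.symm)
  refine ⟨e, ⟨hef.trans hd', ?_⟩, he₁⟩
  by_contra hS
  exact he₂ (by simpa using hs.vtx_mem_component he₁ hS)

lemma IsSimple.two_le_ncard_faceTails (hs : G.IsSimple) (hd : d ∈ G.faceTails g (G.component S v))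
    (hd' : d' ∈ G.faceTails g (G.component S w)) (hvw : G.component S v ≠ G.component S w) :
    2 ≤ (G.faceTails g S).ncard := by
  have hdisj := disjoint_component hvw
  obtain ⟨e, he, hev⟩ := hs.exists_mem_faceTails_vtx_α_mem_component hd hd'.1
    (hdisj.notMem_of_mem_right hd'.2)
  obtain ⟨e', he', hew⟩ := hs.exists_mem_faceTails_vtx_α_mem_component hd' hd.1
    (hdisj.notMem_of_mem_left hd.2)
  exact (Set.one_lt_ncard_iff).2
    ⟨e, e', he, he', fun h => hdisj.notMem_of_mem_left hev (h ▸ hew)⟩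

lemma IsSimple.three_mul_ncard_le_sum_ncard_faceTails (hs : G.IsSimple) (hd : G.DualSimple)
    [Fintype G.Face] (U : Set G.Vert) : 3 * U.ncard ≤ ∑ g, (G.faceTails g U).ncard := by
  rw [sum_ncard_faceTails]
  exact three_mul_ncard_le_ncard_tails fun v _ => three_le_degree hs hd v

/-! ### The pentagonal embedding dual to `K₆` -/

def FaceIn (G : EmbGraph) (g : G.Face) (U : Set G.Vert) : Prop :=
  ∀ d, G.faceOf d = g → G.vtx d ∈ U

lemma ncard_faceTails_add_add_le {A B C : Set G.Vert} (hAB : Disjoint A B) (hAC : Disjoint A C)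
    (hBC : Disjoint B C) :
    (G.faceTails g A).ncard + (G.faceTails g B).ncard + (G.faceTails g C).ncard ≤
      G.faceSize g := by
  rw [← ncard_faceTails_union hAB, ← ncard_faceTails_union (Disjoint.union_left hAC hBC)]
  exact ncard_faceTails_le g _

/-- Both ends of the edge shared with `g₀` are tails of `g` lying in `K`. -/
lemma two_le_ncard_faceTails_of_adj (hg₀ : G.FaceIn g₀ K) (hadj : G.dualGraph.Adj g g₀)
    (hg : 2 ≤ G.faceSize g) : 2 ≤ (G.faceTails g K).ncard := by
  obtain ⟨-, d, rfl, hd⟩ := hadj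
  have h₁ : G.vtx d ∈ K := by simpa using hg₀ (G.facePerm (G.α d)) (by simpa using hd)
  have h₂ : G.vtx (G.facePerm d) ∈ K := by simpa using hg₀ (G.α d) hd
  exact (Set.one_lt_ncard_iff).2
    ⟨d, G.facePerm d, ⟨rfl, h₁⟩, ⟨by simp, h₂⟩, (facePerm_ne_self hg).symm⟩

lemma IsSimple.ncard_faceTails_le_one_of_adj (hs : G.IsSimple) (hg : G.faceSize g = 5)
    (hg₀ : G.FaceIn g₀ (G.component S v)) (hadj : G.dualGraph.Adj g g₀)
    (hvb : G.component S v ≠ G.component S b) :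
    (G.faceTails g (G.component S b)).ncard ≤ 1 := by
  obtain hempty | ⟨d, hd⟩ := (G.faceTails g (G.component S b)).eq_empty_or_nonempty
  · simp [hempty]
  have hK := two_le_ncard_faceTails_of_adj hg₀ hadj (by omega)
  obtain ⟨d', hd'⟩ := Set.nonempty_of_ncard_ne_zero
    (by omega : (G.faceTails g (G.component S v)).ncard ≠ 0)
  have hS := hs.two_le_ncard_faceTails hd' hd hvb
  have := ncard_faceTails_add_add_le (g := g) (disjoint_component hvb).symm
    disjoint_component_left disjoint_component_left
  omega

/-- A face with all its tails in one component `K` of `G - S` is adjacent to the five others,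
which leaves room for at most one tail in another component `B` on each of them; but `B` has
at least two vertices, hence at least six tails. -/
lemma not_faceIn_component_of_dual_K6 [Fintype G.Face] (hs : G.IsSimple) (hd : G.DualSimple)
    (hcomplete : ∀ g h, g ≠ h → G.dualGraph.Adj g h) (hF : Nat.card G.Face = 6)
    (hfs : ∀ g, G.faceSize g = 5) (hS : S.ncard ≤ 2) (hcut : IsCutSet G.underlying S) :
    ¬ G.FaceIn g₀ (G.component S v) := by
  classical
  intro hg₀
  obtain ⟨b, hb, hvb⟩ := hcut.exists_component_ne (G.component S v)
  have hlow := hs.three_mul_ncard_le_sum_ncard_faceTails hd (G.component S b)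
  have hB := hs.two_le_ncard_component hS hb (three_le_degree hs hd b)
  have hzero : G.faceTails g₀ (G.component S b) = ∅ :=
    Set.eq_empty_of_forall_notMem fun d hd =>
      (disjoint_component hvb).notMem_of_mem_left hd.2 (hg₀ d hd.1)
  have hrest : ∑ g ∈ Finset.univ.erase g₀, (G.faceTails g (G.component S b)).ncard ≤ 5 := by
    refine (Finset.sum_le_card_nsmul _ _ 1 fun g hg => ?_).trans ?_
    · exact hs.ncard_faceTails_le_one_of_adj (hfs g) hg₀
        (hcomplete g g₀ (Finset.ne_of_mem_erase hg)) (Ne.symm hvb)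
    · simp [Finset.card_erase_of_mem, ← Nat.card_eq_fintype_card, hF]
  rw [← Finset.add_sum_erase _ _ (Finset.mem_univ g₀), hzero, Set.ncard_empty] at hlow
  omega

def InOneComponent (G : EmbGraph) (S : Set G.Vert) (g : G.Face) : Prop :=
  ∃ v ∉ S, G.FaceIn g (G.component S v ∪ S)

lemma IsSimple.faceTails_nonempty (hs : G.IsSimple) (hg : 3 ≤ G.faceSize g)
    (hnone : ∀ v ∉ ({x, y} : Set G.Vert), ¬ G.FaceIn g (G.component {x, y} v)) :
    (G.faceTails g {x, y}).Nonempty := by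
  obtain ⟨d, hdg, hdS⟩ := hs.exists_vtx_notMem_pair hg
  obtain ⟨d', hd'g, hd'⟩ :
      ∃ d', G.faceOf d' = g ∧ G.vtx d' ∉ G.component {x, y} (G.vtx d) := by
    simpa [FaceIn] using hnone _ hdS
  obtain ⟨e, he, -⟩ :=
    hs.exists_mem_faceTails_vtx_α_mem_component ⟨hdg, mem_component_self hdS⟩ hd'g hd'
  exact ⟨e, he⟩

lemma IsSimple.two_le_ncard_faceTails_of_not_inOneComponent (hs : G.IsSimple)
    (hg : 3 ≤ G.faceSize g) (hone : ¬ G.InOneComponent {x, y} g) :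
    2 ≤ (G.faceTails g {x, y}).ncard := by
  obtain ⟨d, hdg, hdS⟩ := hs.exists_vtx_notMem_pair hg
  obtain ⟨d', hd'g, hd'⟩ :
      ∃ d', G.faceOf d' = g ∧ G.vtx d' ∉ G.component {x, y} (G.vtx d) ∪ {x, y} := by
    simpa [InOneComponent, FaceIn] using fun h : G.FaceIn g _ => hone ⟨_, hdS, h⟩
  rw [Set.mem_union, not_or] at hd'
  refine hs.two_le_ncard_faceTails ⟨hdg, mem_component_self hdS⟩
    ⟨hd'g, mem_component_self hd'.2⟩ fun h => hd'.1 ?_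
  rw [h]
  exact mem_component_self hd'.2

lemma sum_ncard_faceTails_le_nine [Fintype G.Face] (hs : G.IsSimple) (hd : G.DualSimple)
    (hV : Nat.card G.Vert = 9) (hD : Nat.card G.D = 30) (hS : S.ncard ≤ 2) :
    ∑ g, (G.faceTails g S).ncard ≤ 9 := by
  have h₁ := Set.ncard_add_ncard_compl {d | G.vtx d ∈ S}
  have h₂ := Set.ncard_add_ncard_compl S
  have h₃ := three_mul_ncard_le_ncard_tails (U := Sᶜ) fun v _ => three_le_degree hs hd v
  rw [sum_ncard_faceTails]
  change _ + {d | G.vtx d ∈ Sᶜ}.ncard = _ at h₁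
  omega

lemma exists_dart_ends_mem_of_faceIn (hadj : G.dualGraph.Adj p q) (hp : G.FaceIn p (U ∪ S))
    (hq : G.FaceIn q (V ∪ S)) (hUV : Disjoint U V) :
    ∃ d, G.faceOf d = p ∧ G.faceOf (G.α d) = q ∧ G.vtx d ∈ S ∧ G.vtx (G.α d) ∈ S := by
  obtain ⟨-, d, rfl, hdq⟩ := hadj
  have hmem {a : G.Vert} (haU : a ∈ U ∪ S) (haV : a ∈ V ∪ S) : a ∈ S := by
    rcases haU with haU | haS
    · exact haV.resolve_left (hUV.notMem_of_mem_left haU)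
    · exact haS
  refine ⟨d, rfl, hdq, hmem (hp d rfl) ?_, hmem ?_ (hq _ hdq)⟩
  · simpa using hq (G.facePerm (G.α d)) (by simpa using hdq)
  · simpa using hp (G.facePerm d) (by simp)

lemma IsSimple.false_of_inOneComponent_ne (hs : G.IsSimple)
    (hcomplete : ∀ g h, g ≠ h → G.dualGraph.Adj g h) {vp vq vr : G.Vert}
    (hp : G.FaceIn p (G.component {x, y} vp ∪ {x, y}))
    (hq : G.FaceIn q (G.component {x, y} vq ∪ {x, y}))
    (hr : G.FaceIn r (G.component {x, y} vr ∪ {x, y}))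
    (hpq : p ≠ q) (hpr : p ≠ r) (hqr : q ≠ r)
    (hcq : G.component {x, y} vp ≠ G.component {x, y} vq)
    (hcr : G.component {x, y} vp ≠ G.component {x, y} vr) : False := by
  obtain ⟨d, hdp, hdq, hd, hdα⟩ :=
    exists_dart_ends_mem_of_faceIn (hcomplete p q hpq) hp hq (disjoint_component hcq)
  obtain ⟨d', hd'p, hd'r, hd', hd'α⟩ :=
    exists_dart_ends_mem_of_faceIn (hcomplete p r hpr) hp hr (disjoint_component hcr)
  rcases edgeOf_eq_iff_eq_or_eq.1 (hs.edgeOf_eq_of_mem_pair hd' hd'α hd hdα) with rfl | rfl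
  · exact hqr (hdq.symm.trans hd'r)
  · exact hpq (hd'p.symm.trans hdq)

/-- Two faces in different components share an edge inside `{x, y}`, and this edge has only
two sides; so the faces lying in one component cannot meet both sides of the cut. -/
lemma IsSimple.exists_component_forall_not_faceIn (hs : G.IsSimple)
    (hcomplete : ∀ g h, g ≠ h → G.dualGraph.Adj g h) (hfs : ∀ g, 3 ≤ G.faceSize g)
    (hcut : IsCutSet G.underlying {x, y}) (h3 : 3 ≤ {g | G.InOneComponent {x, y} g}.ncard) :
    ∃ b ∉ ({x, y} : Set G.Vert), ∀ g, ¬ G.FaceIn g (G.component {x, y} b ∪ {x, y}) := by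
  obtain ⟨a, b, hab⟩ := hcut
  by_contra! h
  obtain ⟨pa, hpa⟩ := h a a.2
  obtain ⟨pb, hpb⟩ := h b b.2
  have hab' : G.component {x, y} a ≠ G.component {x, y} b := fun h =>
    notMem_component_of_not_reachable hab (h ▸ mem_component_self a.2)
  have hpab : pa ≠ pb := by
    rintro rfl
    obtain ⟨d, hdp, hdS⟩ := hs.exists_vtx_notMem_pair (u := x) (w := y) (hfs pa)
    rcases hpa d hdp with ha | ha
    · rcases hpb d hdp with hb | hb
      · exact (disjoint_component hab').notMem_of_mem_left ha hb
      · exact hdS hb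
    · exact hdS ha
  obtain ⟨r, ⟨vr, hvr, hr⟩, hrab⟩ :
      ({g | G.InOneComponent {x, y} g} \ {pa, pb}).Nonempty := by
    refine Set.nonempty_of_ncard_ne_zero fun h0 => ?_
    have := Set.le_ncard_sdiff {pa, pb} {g | G.InOneComponent {x, y} g}
    have := Set.ncard_insert_le pa {pb}
    rw [Set.ncard_singleton] at this
    omega
  simp only [Set.mem_insert_iff, Set.mem_singleton_iff, not_or] at hrab
  by_cases hra : G.component {x, y} a = G.component {x, y} vr
  · exact hs.false_of_inOneComponent_ne hcomplete hpb hpa hr hpab.symm (Ne.symm hrab.2)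
      (Ne.symm hrab.1) (Ne.symm hab') (hra ▸ Ne.symm hab')
  · exact hs.false_of_inOneComponent_ne hcomplete hpa hpb hr hpab (Ne.symm hrab.1)
      (Ne.symm hrab.2) hab' hra

lemma three_le_ncard_inOneComponent [Fintype G.Face] (hs : G.IsSimple) (hd : G.DualSimple)
    (hF : Nat.card G.Face = 6) (hV : Nat.card G.Vert = 9) (hD : Nat.card G.D = 30)
    (hfs : ∀ g, 3 ≤ G.faceSize g)
    (hnone : ∀ g, ∀ v ∉ ({x, y} : Set G.Vert), ¬ G.FaceIn g (G.component {x, y} v)) :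
    3 ≤ {g | G.InOneComponent {x, y} g}.ncard := by
  classical
  have hle (g : G.Face) :
      2 ≤ (G.faceTails g {x, y}).ncard + if G.InOneComponent {x, y} g then 1 else 0 := by
    split_ifs with hone
    · have := (Set.ncard_pos).2 (hs.faceTails_nonempty (hfs g) (hnone g))
      omega
    · simpa using hs.two_le_ncard_faceTails_of_not_inOneComponent (hfs g) hone
  have hsum := Finset.sum_le_sum fun g (_ : g ∈ Finset.univ) => hle g
  have hnine := sum_ncard_faceTails_le_nine hs hd hV hD
    ((Set.ncard_insert_le x {y}).trans (by rw [Set.ncard_singleton]))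
  have hind : ∑ g, (if G.InOneComponent {x, y} g then 1 else 0) =
      {g | G.InOneComponent {x, y} g}.ncard := by
    simp [Finset.sum_boole, Set.ncard_eq_toFinset_card']
  rw [Finset.sum_add_distrib, hind, Finset.sum_const, Finset.card_univ,
    ← Nat.card_eq_fintype_card, hF, smul_eq_mul] at hsum
  omega

lemma faceTails_component_eq_empty (hB : ∀ g, ¬ G.FaceIn g (G.component S b ∪ S))
    (hone : G.InOneComponent S g) : G.faceTails g (G.component S b) = ∅ := by
  obtain ⟨v, -, hv⟩ := hone
  refine Set.eq_empty_of_forall_notMem fun d ⟨hdg, hdb⟩ => hB g ?_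
  rcases hv d hdg with hdv | hdS
  · rwa [← component_eq_of_mem_of_mem hdv hdb]
  · exact (notMem_of_mem_component hdb hdS).elim

lemma exists_mem_faceTails_component_ne (hB : ¬ G.FaceIn g (G.component S b ∪ S)) :
    ∃ d v, d ∈ G.faceTails g (G.component S v) ∧ G.component S v ≠ G.component S b := by
  obtain ⟨d, hdg, hd⟩ : ∃ d, G.faceOf d = g ∧ G.vtx d ∉ G.component S b ∪ S := by
    simpa [FaceIn] using hB
  rw [Set.mem_union, not_or] at hd
  exact ⟨d, G.vtx d, ⟨hdg, mem_component_self hd.2⟩,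
    fun h => hd.1 (h ▸ mem_component_self hd.2)⟩

lemma IsSimple.ncard_faceTails_component_le_two (hs : G.IsSimple) (hg : G.faceSize g = 5)
    (hB : ¬ G.FaceIn g (G.component S b ∪ S)) :
    (G.faceTails g (G.component S b)).ncard ≤ 2 := by
  obtain hempty | ⟨d, hd⟩ := (G.faceTails g (G.component S b)).eq_empty_or_nonempty
  · simp [hempty]
  obtain ⟨d', v, hd', hvb⟩ := exists_mem_faceTails_component_ne hB
  have hS := hs.two_le_ncard_faceTails hd' hd hvb
  have hC := (Set.ncard_pos).2 ⟨d', hd'⟩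
  have := ncard_faceTails_add_add_le (g := g) (disjoint_component hvb).symm
    disjoint_component_left disjoint_component_left
  omega

/-- Otherwise the two tails in `B` and the tail in another component would all lead into `S`,
giving `S` three heads, hence three tails, on a pentagon. -/
lemma IsSimple.exists_dart_mem_component (hs : G.IsSimple) (hg : G.faceSize g = 5)
    (hB2 : (G.faceTails g (G.component S b)).ncard = 2)
    (hd : d ∈ G.faceTails g (G.component S v)) (hvb : G.component S v ≠ G.component S b) :
    ∃ e, G.faceOf e = g ∧ G.vtx e ∈ G.component S b ∧
      G.vtx (G.α e) ∈ G.component S b := by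
  by_contra! hnone
  obtain ⟨d₀, hd₀⟩ := Set.nonempty_of_ncard_ne_zero
    (by omega : (G.faceTails g (G.component S b)).ncard ≠ 0)
  have hS := hs.two_le_ncard_faceTails hd hd₀ hvb
  have hsum := ncard_faceTails_add_add_le (g := g) (disjoint_component hvb).symm
    disjoint_component_left disjoint_component_left
  have hdα : G.vtx (G.α d) ∈ S := by
    by_contra hdS
    have hnext : G.facePerm d ∈ G.faceTails g (G.component S v) :=
      ⟨by simpa using hd.1, by simpa using hs.vtx_α_mem_component hd.2 hdS⟩
    have := (Set.one_lt_ncard_iff).2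
      ⟨d, G.facePerm d, hd, hnext, (facePerm_ne_self (by rw [hd.1]; omega)).symm⟩
    omega
  have hsub : G.faceTails g (G.component S b) ∪ {d} ⊆
      {e | G.faceOf e = g ∧ G.vtx (G.α e) ∈ S} := by
    rintro e (⟨heg, heb⟩ | rfl)
    · refine ⟨heg, by_contra fun heS => hnone e heg heb (hs.vtx_α_mem_component heb heS)⟩
    · exact ⟨hd.1, hdα⟩
  have hdisj : Disjoint (G.faceTails g (G.component S b)) {d} :=
    Set.disjoint_singleton_right.2 fun h => (disjoint_component hvb).notMem_of_mem_left hd.2 h.2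
  have hC := (Set.ncard_pos).2 ⟨d, hd⟩
  have := Set.ncard_le_ncard hsub
  rw [ncard_faceHeads_eq, Set.ncard_union_eq hdisj, Set.ncard_singleton] at this
  omega

lemma IsSimple.ncard_faces_mem_pair_le_two (hs : G.IsSimple) :
    {g | ∃ e, G.faceOf e = g ∧ G.vtx e ∈ ({u, w} : Set G.Vert) ∧
      G.vtx (G.α e) ∈ ({u, w} : Set G.Vert)}.ncard ≤ 2 := by
  obtain hempty | ⟨_, e₀, rfl, he₀, he₀α⟩ := Set.eq_empty_or_nonempty
    {g | ∃ e, G.faceOf e = g ∧ G.vtx e ∈ ({u, w} : Set G.Vert) ∧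
      G.vtx (G.α e) ∈ ({u, w} : Set G.Vert)}
  · rw [hempty, Set.ncard_empty]
    omega
  have hsub : {g | ∃ e, G.faceOf e = g ∧ G.vtx e ∈ ({u, w} : Set G.Vert) ∧
      G.vtx (G.α e) ∈ ({u, w} : Set G.Vert)} ⊆ {G.faceOf e₀, G.faceOf (G.α e₀)} := by
    rintro _ ⟨e, rfl, he, heα⟩
    rcases edgeOf_eq_iff_eq_or_eq.1 (hs.edgeOf_eq_of_mem_pair he heα he₀ he₀α) with rfl | rfl
    · exact Or.inl rfl
    · exact Or.inr rfl
  refine (Set.ncard_le_ncard hsub).trans ((Set.ncard_insert_le _ _).trans ?_)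
  rw [Set.ncard_singleton]

/-- The component `B` of `b` has at least six tails, at most two on each face not lying in one
component and none on the others; as at most three faces do not lie in one component, `B` has
just two vertices `u, w` and each of these three faces has two tails in `B`. Then each of them
contains the edge `uw`, which has only two sides. -/
lemma IsSimple.false_of_forall_not_faceIn [Fintype G.Face] (hs : G.IsSimple) (hd : G.DualSimple)
    (hF : Nat.card G.Face = 6) (hfs : ∀ g, G.faceSize g = 5) (hS : S.ncard ≤ 2) (hb : b ∉ S)
    (hB : ∀ g, ¬ G.FaceIn g (G.component S b ∪ S))
    (h3 : 3 ≤ {g | G.InOneComponent S g}.ncard) :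
    False := by
  classical
  have hle (g : G.Face) : (G.faceTails g (G.component S b)).ncard ≤
      if G.InOneComponent S g then 0 else 2 := by
    split_ifs with hone
    · simp [faceTails_component_eq_empty hB hone]
    · exact hs.ncard_faceTails_component_le_two (hfs g) (hB g)
  have hbound : ∑ g, (if G.InOneComponent S g then 0 else 2) =
      2 * {g | ¬ G.InOneComponent S g}.ncard := by
    simp [Finset.sum_ite, Set.ncard_eq_toFinset_card', mul_comm]
  have hcompl := Set.ncard_add_ncard_compl {g | G.InOneComponent S g}
  change _ + {g | ¬ G.InOneComponent S g}.ncard = _ at hcompl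
  have hlow := hs.three_mul_ncard_le_sum_ncard_faceTails hd (G.component S b)
  have hB2 := hs.two_le_ncard_component hS hb (three_le_degree hs hd b)
  have hsum := Finset.sum_le_sum fun g (_ : g ∈ Finset.univ) => hle g
  have heq := (Finset.sum_eq_sum_iff_of_le fun g (_ : g ∈ Finset.univ) => hle g).1 (by omega)
  obtain ⟨u, w, -, hBuw⟩ := Set.ncard_eq_two.1 (show (G.component S b).ncard = 2 by omega)
  have hsub : {g | ¬ G.InOneComponent S g} ⊆ {g | ∃ e, G.faceOf e = g ∧
      G.vtx e ∈ ({u, w} : Set G.Vert) ∧ G.vtx (G.α e) ∈ ({u, w} : Set G.Vert)} := by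
    intro g hg
    obtain ⟨d, v, hd, hvb⟩ := exists_mem_faceTails_component_ne (hB g)
    rw [← hBuw]
    exact hs.exists_dart_mem_component (hfs g) ((heq g (Finset.mem_univ g)).trans (if_neg hg))
      hd hvb
  have := (Set.ncard_le_ncard hsub).trans hs.ncard_faces_mem_pair_le_two
  omega

theorem not_isCutSet_pair_of_dual_K6 (hs : G.IsSimple) (hd : G.DualSimple)
    (hcomplete : ∀ g h, g ≠ h → G.dualGraph.Adj g h) (hF : Nat.card G.Face = 6)
    (hV : Nat.card G.Vert = 9) (x y : G.Vert) : ¬ IsCutSet G.underlying {x, y} := by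
  intro hcut
  have : Fintype G.Face := .ofFinite _
  have hfs (g : G.Face) : G.faceSize g = 5 := by
    have := hd.faceSize_add_one hcomplete g
    omega
  have hD : Nat.card G.D = 30 := by
    have := hd.card_darts_add_card_face hcomplete
    rw [hF] at this
    omega
  have hS : ({x, y} : Set G.Vert).ncard ≤ 2 :=
    (Set.ncard_insert_le x {y}).trans (by rw [Set.ncard_singleton])
  by_cases hin : ∃ g v, G.FaceIn g (G.component {x, y} v)
  · obtain ⟨g, v, hg⟩ := hin
    exact not_faceIn_component_of_dual_K6 hs hd hcomplete hF hfs hS hcut hg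
  simp only [not_exists] at hin
  have h3 := three_le_ncard_inOneComponent hs hd hF hV hD (fun g => by rw [hfs g]; omega)
    fun g v _ => hin g v
  obtain ⟨b, hb, hB⟩ := hs.exists_component_forall_not_faceIn hcomplete
    (fun g => by rw [hfs g]; omega) hcut h3
  exact hs.false_of_forall_not_faceIn hd hF hfs hS hb hB h3

end EmbGraph

open EmbGraph in
/-- a simple graph embedded on the torus with a `2`-cut and a
simple dual has a vertex cut of size at most `5` in the dual. -/
theorem torus_two_cut_dual_cut_five
    (G : EmbGraph) (hconn : G.Connected) (hsimple : G.IsSimple)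
    (heuler : G.eulerChar = 0)
    (hcut : ∃ S : Set G.Vert, S.ncard = 2 ∧ IsCutSet G.underlying S)
    (hdual : G.DualSimple) :
    ∃ S : Set G.Face, S.ncard ≤ 5 ∧ IsCutSet G.dualGraph S := by
  by_contra! hsmall
  obtain ⟨S, hS, hScut⟩ := hcut
  obtain ⟨x, y, -, rfl⟩ := Set.ncard_eq_two.1 hS
  by_cases h6 : ∀ f, 6 ≤ G.faceSize f
  · exact not_isCutSet_pair_of_cubic hsimple hdual hconn
      (degree_eq_three_of_six_le_faceSize hsimple hdual heuler h6) x y hScut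
  obtain ⟨f, hf⟩ := not_forall.1 h6
  have hF : Nat.card G.Face ≤ 6 := (card_face_le_faceSize_add_one fun _ =>
    dualGraph_adj_of_faceSize_le (f := f) hsmall (by omega)).trans (by omega)
  have hcomplete (g h : G.Face) : g ≠ h → G.dualGraph.Adj g h :=
    adj_of_forall_not_isCutSet hsmall (by omega)
  have hD := hdual.card_darts_add_card_face hcomplete
  have hE := card_darts_eq_two_mul_numEdges (G := G)
  have hVFE := numVertices_add_numFaces heuler
  have hV := hScut.ncard_add_two_le
  rw [hS] at hV
  unfold numVertices numFaces numEdges at *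
  interval_cases hFcard : Nat.card G.Face
  all_goals try omega
  · obtain ⟨a, b, -, -, hab, hnadj⟩ := hScut.exists_not_adj
    refine hnadj (hsimple.underlying_adj_of_card_edge_eq_choose ?_ hab)
    rw [show Nat.card G.Vert = 5 by omega, show Nat.card G.Edge = 10 by omega]
    rfl
  · exact not_isCutSet_pair_of_dual_K6 hsimple hdual hcomplete hFcard (by omega) x y hScut
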